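/- arXiv:0806.4760 — 6 statements merged into one kernel-verified Lean document; each statement's English description precedes it below -/
import Mathlib

section
/- Every abelian Polish group H, with a fixed compatible complete separable metric d, has a countable dense subgroup D with the following property (*): for every n ≥ 1, points c₁,…,cₙ ∈ D, positive rational ε, setting Uᵢ = {x ∈ H : d(x,cᵢ) ≤ ε}, and every finite system P of equations of the form b₁x₁ ⊕ ⋯ ⊕ bₙxₙ = r with integer coefficients bᵢ and constants r ∈ D: if P has a solution ⟨x₁,…,xₙ⟩ in H with xᵢ ∈ Uᵢ for all i, then P has a solution with xᵢ ∈ D ∩ Uᵢ for all i. -/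
open Pointwise

/-- A rational ball: a set of the form `{x | d(c,x) < ε}` with center `c ∈ D`
and positive rational radius `ε`. -/
def IsRationalBall {H : Type*} [MetricSpace H] (D : Set H) (B : Set H) : Prop :=
  ∃ c ∈ D, ∃ ε : ℚ, 0 < ε ∧ B = {x : H | dist c x < (ε : ℝ)}

/-- Property (*): any finite system of linear equations with integer coefficients and
constants in `D` that has a solution in given closed rational balls centered in `D`
also has a solution in `D` inside the same balls. -/
def PropertyStar {H : Type*} [MetricSpace H] [AddCommGroup H] (D : AddSubgroup H) : Prop :=
  ∀ n : ℕ, 1 ≤ n → ∀ c : Fin n → H, (∀ i, c i ∈ D) → ∀ ε : ℚ, 0 < ε →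
    ∀ P : Finset ((Fin n → ℤ) × H), (∀ p ∈ P, p.2 ∈ D) →
    (∃ x : Fin n → H, (∀ i, dist (x i) (c i) ≤ (ε : ℝ)) ∧
      ∀ p ∈ P, ∑ i, p.1 i • x i = p.2) →
    ∃ x : Fin n → H, (∀ i, x i ∈ D ∧ dist (x i) (c i) ≤ (ε : ℝ)) ∧
      ∀ p ∈ P, ∑ i, p.1 i • x i = p.2

/-- The index set `A`: tuples of pairwise disjoint nonempty rational balls whose union is
a nonempty proper subset of `H`, together with points `r i ∈ U i ∩ D` satisfying the
coherence condition of Definition 3.1. -/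
structure IndexElem (H : Type*) [MetricSpace H] [AddCommGroup H] (D : AddSubgroup H) where
  n : ℕ
  U : Fin n → Set H
  r : Fin n → H
  isBall : ∀ i, IsRationalBall (D : Set H) (U i)
  ballNe : ∀ i, (U i).Nonempty
  disj : ∀ i j, i ≠ j → Disjoint (U i) (U j)
  unionNe : (⋃ i, U i).Nonempty
  proper : (⋃ i, U i) ≠ Set.univ
  rMemU : ∀ i, r i ∈ U i
  rMemD : ∀ i, r i ∈ D
  cond : ∀ i j : Fin n,
    (∃ k, r i + r j = r k ∧ (U i + U j) ∩ (⋃ l, U l) ⊆ U k) ∨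
    (U i + U j) ∩ (⋃ l, U l) = ∅

/-- `U^a`, the union of the balls of `a`. -/
def UA {H : Type*} [MetricSpace H] [AddCommGroup H] {D : AddSubgroup H}
    (a : IndexElem H D) : Set H := ⋃ i, a.U i

/-- The ideal `Z`: sets `X ⊆ A` for which some finite `u ⊆ H` satisfies `u ⊄ U^a`
for all `a ∈ X`. -/
def Zid {H : Type*} [MetricSpace H] [AddCommGroup H] (D : AddSubgroup H) :
    Set (Set (IndexElem H D)) :=
  {X | ∃ u : Set H, u.Finite ∧ ∀ a ∈ X, ¬ u ⊆ UA a}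

/-- The coordinate maps `f_a`: `f_a x = x - r^a_i` if `x ∈ U^a_i`, and `0` if `x ∉ U^a`. -/
noncomputable def fmap {H : Type*} [MetricSpace H] [AddCommGroup H] {D : AddSubgroup H}
    (a : IndexElem H D) (x : H) : H :=
  letI := Classical.dec (∃ i, x ∈ a.U i)
  if h : ∃ i, x ∈ a.U i then x - a.r h.choose else 0

/-!
Start from a countable dense set and close it, in `ω` steps, under the group operations and
under adjoining one chosen solution of every system (centers, radius, equations) whose
parameters lie in the current set. There are only countably many such systems over a countable
set, so every stage stays countable; and a system with parameters in the union has its finitely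
many parameters in some stage, so its chosen solution appears at the next one.
-/

theorem AddSubgroup.countable_closure {G : Type*} [AddGroup G] {s : Set G} (hs : s.Countable) :
    (AddSubgroup.closure s : Set G).Countable := by
  have := hs.to_subtype
  rw [FreeAddGroup.closure_eq_range]
  exact Set.countable_range _

section ClosedSubgroup

variable {G : Type*} [AddGroup G] (s : Set G) (W : Set G → Set G)

noncomputable def closureStage : ℕ → AddSubgroup G
  | 0 => AddSubgroup.closure s
  | k + 1 => AddSubgroup.closure (closureStage k ∪ W (closureStage k))

theorem closureStage_mono : Monotone (closureStage s W) :=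
  monotone_nat_of_le_succ fun _ _ hx =>
    AddSubgroup.subset_closure (Set.subset_union_left hx)

variable {s W}

theorem countable_closureStage (hs : s.Countable) (hW : ∀ S, S.Countable → (W S).Countable) :
    ∀ k, (closureStage s W k : Set G).Countable
  | 0 => AddSubgroup.countable_closure hs
  | k + 1 => AddSubgroup.countable_closure <|
      (countable_closureStage hs hW k).union (hW _ (countable_closureStage hs hW k))

theorem exists_countable_addSubgroup_closed (hs : s.Countable) (hW_mono : Monotone W)
    (hW : ∀ S, S.Countable → (W S).Countable) :
    ∃ D : AddSubgroup G, (D : Set G).Countable ∧ s ⊆ D ∧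
      ∀ F : Set G, F.Finite → F ⊆ D → W F ⊆ D := by
  have hmono : Monotone fun k => (closureStage s W k : Set G) :=
    SetLike.coe_mono.comp (closureStage_mono s W)
  have hcoe : ((⨆ k, closureStage s W k : AddSubgroup G) : Set G) =
      ⋃ k, (closureStage s W k : Set G) :=
    AddSubgroup.coe_iSup_of_directed (closureStage_mono s W).directed_le
  refine ⟨⨆ k, closureStage s W k, ?_, ?_, ?_⟩
  · rw [hcoe]
    exact Set.countable_iUnion (countable_closureStage hs hW)
  · exact AddSubgroup.subset_closure.trans
      (SetLike.coe_subset_coe.2 (le_iSup (closureStage s W) 0))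
  · intro F hF_fin hF
    rw [hcoe, ← hF_fin.coe_toFinset] at hF
    obtain ⟨k, hk⟩ := hmono.directed_le.exists_mem_subset_of_finset_subset_biUnion hF
    rw [hF_fin.coe_toFinset] at hk
    calc W F ⊆ W (closureStage s W k) := hW_mono hk
      _ ⊆ closureStage s W (k + 1) := AddSubgroup.subset_closure.trans' Set.subset_union_right
      _ ⊆ _ := SetLike.coe_subset_coe.2 (le_iSup _ (k + 1))

end ClosedSubgroup

theorem Set.countable_ofPred_finset_subset {α : Type*} {T : Set α} (hT : T.Countable) :
    {F : Finset α | (F : Set α) ⊆ T}.Countable :=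
  ((Set.countable_ofPred_finite_subset hT).preimage Finset.coe_injective).mono
    fun F hF => Set.mem_ofPred.2 ⟨F.finite_toSet, hF⟩

section BallSystems

variable {H : Type*} [MetricSpace H] [AddCommGroup H]

def IsBallSolution {n : ℕ} (c : Fin n → H) (ε : ℚ) (P : Finset ((Fin n → ℤ) × H))
    (x : Fin n → H) : Prop :=
  (∀ i, dist (x i) (c i) ≤ (ε : ℝ)) ∧ ∀ p ∈ P, ∑ i, p.1 i • x i = p.2

/-- `Classical.epsilon` picks an arbitrary tuple for an unsolvable system; those entries are
harmless extra elements. -/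
noncomputable def chosenBallSolutions (S : Set H) : Set H :=
  ⋃ (n : ℕ) (ε : ℚ) (c ∈ {c : Fin n → H | ∀ i, c i ∈ S})
    (P ∈ {P : Finset ((Fin n → ℤ) × H) | ∀ p ∈ P, p.2 ∈ S}),
    Set.range (Classical.epsilon (IsBallSolution c ε P))

theorem chosenBallSolutions_mono : Monotone (chosenBallSolutions (H := H)) := fun _ _ hST =>
  Set.iUnion₂_mono fun _ _ => Set.biUnion_mono (fun _ hc i => hST (hc i)) fun _ _ =>
    Set.biUnion_subset_biUnion_left fun _ hP p hp => hST (hP p hp)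

theorem countable_chosenBallSolutions {S : Set H} (hS : S.Countable) :
    (chosenBallSolutions S).Countable := by
  refine Set.countable_iUnion fun n => Set.countable_iUnion fun ε => ?_
  have hcenters : {c : Fin n → H | ∀ i, c i ∈ S}.Countable := Set.countable_pi fun _ => hS
  have hequations : (Prod.snd ⁻¹' S : Set ((Fin n → ℤ) × H)).Countable :=
    Set.univ_prod ▸ Set.countable_univ.prod hS
  have hsystems : {P : Finset ((Fin n → ℤ) × H) | ∀ p ∈ P, p.2 ∈ S}.Countable :=
    Set.countable_ofPred_finset_subset hequations
  exact hcenters.biUnion fun c _ => hsystems.biUnion fun P _ => Set.countable_range _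

theorem propertyStar_of_chosenBallSolutions_subset {D : AddSubgroup H}
    (hD : ∀ F : Set H, F.Finite → F ⊆ D → chosenBallSolutions F ⊆ D) : PropertyStar D := by
  intro n _ c hc ε _ P hP hsol
  set x := Classical.epsilon (IsBallSolution c ε P)
  have hx : IsBallSolution c ε P x := Classical.epsilon_spec hsol
  let F : Set H := Set.range c ∪ Prod.snd '' (P : Set ((Fin n → ℤ) × H))
  have hF_fin : F.Finite := (Set.finite_range c).union (P.finite_toSet.image _)
  have hFD : F ⊆ D := Set.union_subset (Set.range_subset_iff.2 hc) (Set.image_subset_iff.2 hP)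
  have hxF : ∀ i, x i ∈ chosenBallSolutions F := fun i =>
    Set.mem_iUnion₂.2 ⟨n, ε, Set.mem_biUnion (fun j => Set.mem_union_left _ (Set.mem_range_self j))
      (Set.mem_biUnion (fun p hp => Set.mem_union_right _ (Set.mem_image_of_mem _ hp))
        (Set.mem_range_self i))⟩
  exact ⟨x, fun i => ⟨hD F hF_fin hFD (hxF i), hx.1 i⟩, hx.2⟩

end BallSystems

theorem exists_countable_dense_subgroup_with_star_general (H : Type*) [MetricSpace H]
    [TopologicalSpace.SeparableSpace H] [AddCommGroup H] :
    ∃ D : AddSubgroup H, (D : Set H).Countable ∧ Dense (D : Set H) ∧ PropertyStar D := by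
  obtain ⟨s, hs_countable, hs_dense⟩ := TopologicalSpace.exists_countable_dense H
  obtain ⟨D, hD_countable, hsD, hD⟩ := exists_countable_addSubgroup_closed hs_countable
    chosenBallSolutions_mono fun _ => countable_chosenBallSolutions
  exact ⟨D, hD_countable, hs_dense.mono hsD, propertyStar_of_chosenBallSolutions_subset hD⟩

theorem exists_countable_dense_subgroup_with_star (H : Type*) [MetricSpace H]
    [CompleteSpace H] [TopologicalSpace.SeparableSpace H]
    [AddCommGroup H] [IsTopologicalAddGroup H] :
    ∃ D : AddSubgroup H, (D : Set H).Countable ∧ Dense (D : Set H) ∧ PropertyStar D :=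
  exists_countable_dense_subgroup_with_star_general H
end

section
/- If y₁,…,yₙ ∈ H are pairwise distinct, then there exist pairwise disjoint rational balls B₁,…,Bₙ with yᵢ ∈ Bᵢ for all i such that, setting B = B₁ ∪ ⋯ ∪ Bₙ, for all i,j ∈ {1,…,n} either there exists k with (Bᵢ ⊕ Bⱼ) ∩ B ⊆ Bₖ, or (Bᵢ ⊕ Bⱼ) ∩ B = ∅. -/
open Pointwise

/-! Choose `ε` rational and small and centres `c i ∈ D` within `ε` of `y i`; then
`B i = {x | d(c i, x) < ε}` lies in the `2ε`-ball around `y i`. The `y i` are `δ`-separated,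
and by continuity of addition `B i ⊕ B j` lies in a `δ / 4`-ball around `y i ⊕ y j`, so for
`ε ≤ δ / 8` the balls `B k` are disjoint and `B i ⊕ B j` meets at most one of them. -/

open Filter Metric Set Topology

lemma Function.Injective.exists_pos_le_dist {X ι : Type*} [MetricSpace X] [Finite ι]
    {y : ι → X} (hy : Function.Injective y) :
    ∃ δ > 0, ∀ i j, i ≠ j → δ ≤ dist (y i) (y j) := by
  have hsmall : ∀ᶠ δ in 𝓝[>] (0 : ℝ), ∀ i j, i ≠ j → δ ≤ dist (y i) (y j) := by
    simp only [eventually_all]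
    exact fun i j hij => nhdsWithin_le_nhds (eventually_le_nhds (dist_pos.2 (hy.ne hij)))
  exact (eventually_mem_nhdsWithin.and hsmall).exists

lemma exists_inter_iUnion_subset_or_eq_empty {X ι : Type*} [PseudoMetricSpace X]
    {B : ι → Set X} {y : ι → X} {ρ σ : ℝ} (hB : ∀ i, B i ⊆ ball (y i) ρ)
    (hsep : ∀ i j, i ≠ j → 2 * (ρ + σ) ≤ dist (y i) (y j)) {S : Set X} {z : X}
    (hS : S ⊆ ball z σ) :
    (∃ k, S ∩ ⋃ l, B l ⊆ B k) ∨ S ∩ ⋃ l, B l = ∅ := by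
  rcases (S ∩ ⋃ l, B l).eq_empty_or_nonempty with hempty | ⟨x, hxS, hx⟩
  · exact Or.inr hempty
  obtain ⟨k, hxk⟩ := mem_iUnion.1 hx
  refine Or.inl ⟨k, fun x' ⟨hx'S, hx'⟩ => ?_⟩
  obtain ⟨m, hx'm⟩ := mem_iUnion.1 hx'
  obtain rfl : m = k := by
    by_contra hmk
    have hx'z : dist x' z < σ := hS hx'S
    have hxz : dist x z < σ := hS hxS
    have hx'y : dist x' (y m) < ρ := hB m hx'm
    have hxy : dist x (y k) < ρ := hB k hxk
    have := calc
      dist (y m) (y k) ≤ dist (y m) x' + dist x' x + dist x (y k) := dist_triangle4 _ _ _ _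
      _ ≤ dist (y m) x' + (dist x' z + dist z x) + dist x (y k) := by
        gcongr; exact dist_triangle _ _ _
      _ < 2 * (ρ + σ) := by rw [dist_comm (y m), dist_comm z]; linarith
    exact (hsep m k hmk).not_gt this
  exact hx'm

lemma eventually_ball_add_ball_subset {X : Type*} [PseudoMetricSpace X] [Add X]
    [ContinuousAdd X] (a b : X) {σ : ℝ} (hσ : 0 < σ) :
    ∀ᶠ η in 𝓝[>] (0 : ℝ), ball a η + ball b η ⊆ ball (a + b) σ := by
  obtain ⟨η, hη, hadd⟩ :=
    Metric.continuousAt_iff.1 ((continuous_add (M := X)).continuousAt (x := (a, b))) σ hσ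
  filter_upwards [Ioc_mem_nhdsGT hη] with η' hη'
  rintro _ ⟨u, hu, v, hv, rfl⟩
  refine hadd (x := (u, v)) ?_
  rw [Prod.dist_eq]
  exact max_lt ((mem_ball.1 hu).trans_le hη'.2) ((mem_ball.1 hv).trans_le hη'.2)

lemma Filter.Eventually.exists_rat_pos {p : ℝ → Prop} (h : ∀ᶠ x in 𝓝[>] (0 : ℝ), p x) :
    ∃ q : ℚ, 0 < q ∧ p q := by
  obtain ⟨u, hu, hsub⟩ := mem_nhdsGT_iff_exists_Ioo_subset.1 h
  obtain ⟨q, hq0, hqu⟩ := exists_rat_btwn (mem_Ioi.1 hu)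
  exact ⟨q, by exact_mod_cast hq0, hsub ⟨hq0, hqu⟩⟩

theorem exists_disjoint_rational_balls_general {H : Type*} [MetricSpace H]
    [AddCommGroup H] [IsTopologicalAddGroup H]
    (D : AddSubgroup H) (hDdense : Dense (D : Set H))
    (n : ℕ) (y : Fin n → H) (hy : Function.Injective y) :
    ∃ B : Fin n → Set H,
      (∀ i, IsRationalBall (D : Set H) (B i)) ∧
      (∀ i, y i ∈ B i) ∧
      (∀ i j, i ≠ j → Disjoint (B i) (B j)) ∧
      ∀ i j : Fin n,
        (∃ k, (B i + B j) ∩ (⋃ l, B l) ⊆ B k) ∨ (B i + B j) ∩ (⋃ l, B l) = ∅ := by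
  obtain ⟨δ, hδ, hsep⟩ := hy.exists_pos_le_dist
  have hsmall : ∀ᶠ η in 𝓝[>] (0 : ℝ), η ≤ δ / 4 ∧
      ∀ i j, ball (y i) η + ball (y j) η ⊆ ball (y i + y j) (δ / 4) := by
    filter_upwards [Ioc_mem_nhdsGT (by positivity : 0 < δ / 4), eventually_all.2 fun i =>
      eventually_all.2 fun j => eventually_ball_add_ball_subset (y i) (y j) (σ := δ / 4)
        (by positivity)] with η hη hadd using ⟨hη.2, hadd⟩
  obtain ⟨ε, hε, hεδ, hadd⟩ := (eventually_nhdsGT_zero_mul_left two_pos hsmall).exists_rat_pos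
  choose c hcD hc using fun i => hDdense.exists_dist_lt (y i) (Rat.cast_pos.2 hε)
  have hB : ∀ i, {x | dist (c i) x < (ε : ℝ)} ⊆ ball (y i) (2 * ε) :=
    fun i x (hx : dist (c i) x < ε) =>
      mem_ball.2 <| by linarith [dist_triangle_left x (y i) (c i), dist_comm (c i) (y i), hc i]
  refine ⟨fun i => {x | dist (c i) x < (ε : ℝ)}, fun i => ⟨c i, hcD i, ε, hε, rfl⟩,
    fun i => (dist_comm _ _).trans_lt (hc i), fun i j hij => ?_, fun i j => ?_⟩
  · exact (ball_disjoint_ball (by linarith [hsep i j hij])).mono (hB i) (hB j)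
  · exact exists_inter_iUnion_subset_or_eq_empty hB (fun i j hij => by linarith [hsep i j hij])
      ((add_subset_add (hB i) (hB j)).trans (hadd i j))

theorem exists_disjoint_rational_balls {H : Type*} [MetricSpace H] [CompleteSpace H]
    [TopologicalSpace.SeparableSpace H]
    [AddCommGroup H] [IsTopologicalAddGroup H] [Uncountable H]
    (D : AddSubgroup H) (hDcount : (D : Set H).Countable) (hDdense : Dense (D : Set H))
    (n : ℕ) (y : Fin n → H) (hy : Function.Injective y) :
    ∃ B : Fin n → Set H,
      (∀ i, IsRationalBall (D : Set H) (B i)) ∧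
      (∀ i, y i ∈ B i) ∧
      (∀ i j, i ≠ j → Disjoint (B i) (B j)) ∧
      ∀ i j : Fin n,
        (∃ k, (B i + B j) ∩ (⋃ l, B l) ⊆ B k) ∨ (B i + B j) ∩ (⋃ l, B l) = ∅ :=
  exists_disjoint_rational_balls_general D hDdense n y hy
end

section
/- Z is an ideal over A: it is closed under subsets and finite unions, it contains all finite subsets of A, and A itself does not belong to Z. -/
open Pointwise

/-!
Closure under subsets and finite unions is immediate, and a finite `X ⊆ A` lies in `Z` because
each `U^a` misses a point of `H`. The content is `A ∉ Z`: every finite `u ⊆ H` is covered by some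
`U^a`. Enumerate `s = u ∪ {0}` as `x₁, …, x_m` (so `m ≥ 1`, as (*) needs) and pick `z ∉ s`.
For small `R` the balls `B(x_i, R)` are pairwise disjoint, miss `z`, and `B(x_i, R) ⊕ B(x_j, R)`
misses `B(x_l, R)` whenever `x_i ⊕ x_j ≠ x_l` (continuity of addition). Property (*) moves the
`x_i` to points `d_i ∈ D` so close that every relation `x_i ⊕ x_j = x_k` still holds for the
`d_i`; rational balls around the `d_i` inside the `B(x_i, R)` then form an element of `A` whose
union contains `u`.
-/

open Filter Topology Metric Set

lemma eventually_disjoint_of_tendsto_smallSets {α β : Type*} {l : Filter α} {f g : Filter β}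
    {A B : α → Set β} (hfg : Disjoint f g) (hA : Tendsto A l f.smallSets)
    (hB : Tendsto B l g.smallSets) : ∀ᶠ t in l, Disjoint (A t) (B t) := by
  obtain ⟨U, hU, V, hV, hUV⟩ := Filter.disjoint_iff.1 hfg
  filter_upwards [tendsto_smallSets_iff.1 hA U hU, tendsto_smallSets_iff.1 hB V hV]
    with t hAt hBt using hUV.mono hAt hBt

def AddSeparated {X ι : Type*} [Add X] (x : ι → X) (V : ι → Set X) : Prop :=
  Pairwise (fun i j ↦ Disjoint (V i) (V j)) ∧
    ∀ i j l, x i + x j ≠ x l → Disjoint (V i + V j) (V l)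

lemma AddSeparated.mono {X ι : Type*} [Add X] {x : ι → X} {V W : ι → Set X}
    (h : AddSeparated x V) (hWV : ∀ i, W i ⊆ V i) : AddSeparated x W :=
  ⟨fun i j hij ↦ (h.1 hij).mono (hWV i) (hWV j),
    fun i j l hne ↦ (h.2 i j l hne).mono (Set.add_subset_add (hWV i) (hWV j)) (hWV l)⟩

section Separation

variable {X : Type*} [MetricSpace X]

lemma tendsto_ball_smallSets (x : X) : Tendsto (ball x) (𝓝 0) (𝓝 x).smallSets :=
  tendsto_smallSets_iff.2 fun _ ↦ eventually_ball_subset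

lemma tendsto_ball_add_ball_smallSets [Add X] [ContinuousAdd X] (x y : X) :
    Tendsto (fun R ↦ ball x R + ball y R) (𝓝 0) (𝓝 (x + y)).smallSets := by
  refine tendsto_smallSets_iff.2 fun u hu ↦ ?_
  filter_upwards [eventually_ball_subset ((continuous_add.tendsto (x, y)) hu)] with R hR
  rw [← ball_prod_same] at hR
  exact Set.add_subset_iff.2 fun a ha b hb ↦ hR (Set.mk_mem_prod ha hb)

lemma eventually_addSeparated_ball [Add X] [ContinuousAdd X] {ι : Type*} [Finite ι]
    {x : ι → X} (hx : Function.Injective x) :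
    ∀ᶠ R in 𝓝 (0 : ℝ), AddSeparated x fun i ↦ ball (x i) R := by
  have hdisj : ∀ i j, ∀ᶠ R in 𝓝 (0 : ℝ), i ≠ j → Disjoint (ball (x i) R) (ball (x j) R) :=
    fun i j ↦ eventually_imp_distrib_left.2 fun hij ↦ eventually_disjoint_of_tendsto_smallSets
      (disjoint_nhds_nhds.2 (hx.ne hij)) (tendsto_ball_smallSets _) (tendsto_ball_smallSets _)
  have hadd : ∀ i j l, ∀ᶠ R in 𝓝 (0 : ℝ),
      x i + x j ≠ x l → Disjoint (ball (x i) R + ball (x j) R) (ball (x l) R) :=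
    fun i j l ↦ eventually_imp_distrib_left.2 fun hne ↦ eventually_disjoint_of_tendsto_smallSets
      (disjoint_nhds_nhds.2 hne) (tendsto_ball_add_ball_smallSets _ _) (tendsto_ball_smallSets _)
  filter_upwards [eventually_all.2 fun i ↦ eventually_all.2 (hdisj i),
    eventually_all.2 fun i ↦ eventually_all.2 fun j ↦ eventually_all.2 (hadd i j)]
    with R h₁ h₂ using ⟨h₁, h₂⟩

end Separation

lemma sum_single_add_single_sub_single_smul {ι M : Type*} [Fintype ι] [DecidableEq ι]
    [AddCommGroup M] (y : ι → M) (i j k : ι) :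
    ∑ l, (Pi.single i 1 + Pi.single j 1 - Pi.single k 1 : ι → ℤ) l • y l = y i + y j - y k := by
  simp [add_smul, sub_smul, Finset.sum_add_distrib, Finset.sum_sub_distrib, Pi.single_apply,
    ite_smul]

section Approximation

variable {H : Type*} [MetricSpace H] [AddCommGroup H] {D : AddSubgroup H}

lemma PropertyStar.exists_near_solution (hstar : PropertyStar D) (hD : Dense (D : Set H))
    {n : ℕ} (hn : 1 ≤ n) {x : Fin n → H} {P : Finset ((Fin n → ℤ) × H)}
    (hPD : ∀ p ∈ P, p.2 ∈ D) (hPx : ∀ p ∈ P, ∑ i, p.1 i • x i = p.2) {ε : ℚ} (hε : 0 < ε) :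
    ∃ d : Fin n → H, (∀ i, d i ∈ D ∧ dist (d i) (x i) < ε) ∧
      ∀ p ∈ P, ∑ i, p.1 i • d i = p.2 := by
  have hε2 : (0 : ℝ) < (ε / 2 : ℚ) := by exact_mod_cast half_pos hε
  choose c hcD hxc using fun i ↦ hD.exists_dist_lt (x i) hε2
  obtain ⟨d, hd, hdP⟩ := hstar n hn c hcD (ε / 2) (half_pos hε) P hPD
    ⟨x, fun i ↦ (hxc i).le, hPx⟩
  refine ⟨d, fun i ↦ ⟨(hd i).1, ?_⟩, hdP⟩
  calc dist (d i) (x i) ≤ dist (d i) (c i) + dist (x i) (c i) := dist_triangle_right _ _ _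
    _ < (ε / 2 : ℚ) + (ε / 2 : ℚ) := add_lt_add_of_le_of_lt (hd i).2 (hxc i)
    _ = ε := by push_cast; ring

lemma PropertyStar.exists_near_preserving_add (hstar : PropertyStar D) (hD : Dense (D : Set H))
    {n : ℕ} (hn : 1 ≤ n) (x : Fin n → H) {ε : ℚ} (hε : 0 < ε) :
    ∃ d : Fin n → H, (∀ i, d i ∈ D ∧ dist (d i) (x i) < ε) ∧
      ∀ i j k, x i + x j = x k → d i + d j = d k := by
  classical
  let relation (t : Fin n × Fin n × Fin n) : (Fin n → ℤ) × H :=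
    (Pi.single t.1 1 + Pi.single t.2.1 1 - Pi.single t.2.2 1, 0)
  let P := (Finset.univ.filter fun t : Fin n × Fin n × Fin n ↦ x t.1 + x t.2.1 = x t.2.2).image
    relation
  have hPx : ∀ p ∈ P, ∑ i, p.1 i • x i = p.2 := by
    simp only [P, Finset.mem_image, Finset.mem_filter, forall_exists_index, and_imp]
    rintro _ ⟨i, j, k⟩ - hijk rfl
    simp only [relation]
    rw [sum_single_add_single_sub_single_smul, sub_eq_zero]
    exact hijk
  have hPD : ∀ p ∈ P, p.2 ∈ D := by
    simp only [P, Finset.mem_image]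
    rintro _ ⟨t, -, rfl⟩
    exact D.zero_mem
  obtain ⟨d, hd, hdP⟩ := hstar.exists_near_solution hD hn hPD hPx hε
  refine ⟨d, hd, fun i j k hijk ↦ ?_⟩
  have := hdP (relation (i, j, k)) (Finset.mem_image_of_mem _ (by simpa using hijk))
  rw [sum_single_add_single_sub_single_smul] at this
  exact sub_eq_zero.1 this

end Approximation

section Covering

variable {H : Type*} [MetricSpace H] [AddCommGroup H] {D : AddSubgroup H}

lemma exists_indexElem_of_addSeparated {m : ℕ} (hm : 0 < m) {x d : Fin m → H}
    (hx : Function.Injective x) (hdD : ∀ i, d i ∈ D)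
    (hd_add : ∀ i j k, x i + x j = x k → d i + d j = d k) {η : ℚ} (hη : 0 < η)
    (hsep : AddSeparated x fun i ↦ ball (d i) η) (hproper : (⋃ i, ball (d i) η) ≠ univ) :
    ∃ a : IndexElem H D, UA a = ⋃ i, ball (d i) η := by
  have hη' : (0 : ℝ) < η := by exact_mod_cast hη
  have hdU : ∀ i, d i ∈ ball (d i) η := fun i ↦ mem_ball_self hη'
  have hsum : ∀ i j, ∀ w ∈ (ball (d i) η + ball (d j) η) ∩ ⋃ l, ball (d l) η,
      ∃ l, x i + x j = x l ∧ w ∈ ball (d l) (η : ℝ) := by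
    rintro i j w ⟨hw, hwU⟩
    obtain ⟨l, hl⟩ := mem_iUnion.1 hwU
    by_contra! h
    exact Set.disjoint_left.1 (hsep.2 i j l fun he ↦ h l he hl) hw hl
  refine ⟨⟨m, fun i ↦ ball (d i) η, d, fun i ↦ ⟨d i, hdD i, η, hη, ?_⟩, fun i ↦ ⟨d i, hdU i⟩,
    fun i j hij ↦ hsep.1 hij, ⟨d ⟨0, hm⟩, mem_iUnion.2 ⟨_, hdU _⟩⟩, hproper, hdU, hdD,
    fun i j ↦ ?_⟩, rfl⟩
  · ext w
    simp [dist_comm]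
  by_cases h : ∃ k, x i + x j = x k
  · obtain ⟨k, hk⟩ := h
    refine .inl ⟨k, hd_add i j k hk, fun w hw ↦ ?_⟩
    obtain ⟨l, hl, hwl⟩ := hsum i j w hw
    rwa [← hx (hk.symm.trans hl)] at hwl
  · refine .inr (eq_empty_iff_forall_notMem.2 fun w hw ↦ ?_)
    obtain ⟨l, hl, -⟩ := hsum i j w hw
    exact h ⟨l, hl⟩

variable [ContinuousAdd H] [Infinite H]

lemma exists_indexElem_superset (hstar : PropertyStar D) (hD : Dense (D : Set H))
    {u : Set H} (hu : u.Finite) : ∃ a : IndexElem H D, u ⊆ UA a := by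
  obtain ⟨m, x, hxs⟩ := (hu.insert 0).fin_embedding
  have hm : 0 < m := Fin.pos_iff_nonempty.2 <| by
    obtain ⟨i, -⟩ : (0 : H) ∈ range x := hxs ▸ mem_insert 0 u
    exact ⟨i⟩
  obtain ⟨z, hz⟩ := (hu.insert 0).infinite_compl.nonempty
  have hzx : ∀ i, x i ≠ z := fun i h ↦ hz (hxs ▸ h ▸ mem_range_self i)
  obtain ⟨ε, hε, hsmall⟩ := Metric.eventually_nhds_iff.1 <|
    (eventually_addSeparated_ball x.injective).and <| eventually_all.2 fun i ↦
      eventually_ball_subset (compl_singleton_mem_nhds (hzx i))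
  obtain ⟨η, hη, hηε⟩ := exists_rat_btwn (half_pos hε)
  obtain ⟨hsep, hzR⟩ := hsmall (y := 2 * η) <| by
    rw [Real.dist_0_eq_abs, abs_of_pos (by positivity)]
    linarith
  obtain ⟨d, hd, hd_add⟩ := hstar.exists_near_preserving_add hD hm x (Rat.cast_pos.1 hη)
  have hsub : ∀ i, ball (d i) η ⊆ ball (x i) (2 * η) := fun i ↦
    ball_subset_ball' (by linarith [(hd i).2])
  have hproper : (⋃ i, ball (d i) η) ≠ univ := fun h ↦ by
    obtain ⟨i, hi⟩ := mem_iUnion.1 (h ▸ mem_univ z)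
    exact hzR i (hsub i hi) rfl
  obtain ⟨a, ha⟩ := exists_indexElem_of_addSeparated hm x.injective (fun i ↦ (hd i).1)
    hd_add (Rat.cast_pos.1 hη) (hsep.mono hsub) hproper
  refine ⟨a, ha ▸ fun y hy ↦ ?_⟩
  obtain ⟨i, rfl⟩ : y ∈ range x := hxs ▸ mem_insert_of_mem 0 hy
  exact mem_iUnion.2 ⟨i, mem_ball'.2 (hd i).2⟩

end Covering

theorem Zid_is_ideal_general {H : Type*} [MetricSpace H]
    [AddCommGroup H] [IsTopologicalAddGroup H] [Uncountable H]
    (D : AddSubgroup H) (hDdense : Dense (D : Set H))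
    (hstar : PropertyStar D) :
    (∀ X ∈ Zid D, ∀ Y : Set (IndexElem H D), Y ⊆ X → Y ∈ Zid D) ∧
    (∀ X ∈ Zid D, ∀ Y ∈ Zid D, X ∪ Y ∈ Zid D) ∧
    (∀ X : Set (IndexElem H D), X.Finite → X ∈ Zid D) ∧
    (Set.univ : Set (IndexElem H D)) ∉ Zid D := by
  refine ⟨?_, ?_, ?_, ?_⟩
  · rintro X ⟨u, hu, hXu⟩ Y hYX
    exact ⟨u, hu, fun a ha ↦ hXu a (hYX ha)⟩
  · rintro X ⟨u, hu, hXu⟩ Y ⟨v, hv, hYv⟩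
    refine ⟨u ∪ v, hu.union hv, ?_⟩
    rintro a (ha | ha) huv
    exacts [hXu a ha (subset_union_left.trans huv), hYv a ha (subset_union_right.trans huv)]
  · intro X hX
    choose p hp using fun a : IndexElem H D ↦ (ne_univ_iff_exists_notMem _).1 a.proper
    exact ⟨p '' X, hX.image p, fun a ha hsub ↦ hp a (hsub (mem_image_of_mem p ha))⟩
  · rintro ⟨u, hu, hbad⟩
    obtain ⟨a, ha⟩ := exists_indexElem_superset hstar hDdense hu
    exact hbad a (mem_univ a) ha

theorem Zid_is_ideal {H : Type*} [MetricSpace H] [CompleteSpace H] [TopologicalSpace.SeparableSpace H]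
    [AddCommGroup H] [IsTopologicalAddGroup H] [Uncountable H]
    (D : AddSubgroup H) (hDcount : (D : Set H).Countable) (hDdense : Dense (D : Set H))
    (hstar : PropertyStar D) :
    (∀ X ∈ Zid D, ∀ Y : Set (IndexElem H D), Y ⊆ X → Y ∈ Zid D) ∧
    (∀ X ∈ Zid D, ∀ Y ∈ Zid D, X ∪ Y ∈ Zid D) ∧
    (∀ X : Set (IndexElem H D), X.Finite → X ∈ Zid D) ∧
    (Set.univ : Set (IndexElem H D)) ∉ Zid D :=
  Zid_is_ideal_general D hDdense hstar
end

section
/- If H is σ-compact (a countable union of compact subsets), then Z, viewed as a subset of the Cantor space 2^A of subsets of A (via characteristic functions along a fixed enumeration of the countable set A), is an F_σ set. -/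
open Pointwise

/-!
A finite witness `u = {v₀, …, v_{n-1}}` lies in some compact piece `K_m` of `H`, so `Z` is the union over `(m, n)`
of the sets of `x` admitting a witness in `K_mⁿ`. Each of these is the projection, along the
compact factor `K_mⁿ`, of the set of pairs `(v, x)` with `v_i ∉ U^{e k}` for some `i` whenever
`x k` holds; that set is closed because every `U^a` is open and only finitely many `v_i` occur.
-/

open Set

theorem IsRationalBall.isOpen {H : Type*} [MetricSpace H] {D B : Set H}
    (h : IsRationalBall D B) : IsOpen B := by
  obtain ⟨c, -, ε, -, rfl⟩ := h
  exact isOpen_lt (continuous_const.dist continuous_id) continuous_const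

theorem isOpen_UA {H : Type*} [MetricSpace H] [AddCommGroup H] {D : AddSubgroup H}
    (a : IndexElem H D) : IsOpen (UA a) :=
  isOpen_iUnion fun i => (a.isBall i).isOpen

section FiniteWitness

variable {X ι : Type*} [TopologicalSpace X] {V : ι → Set X}

theorem isClosed_setOf_forall_exists_not_mem (hV : ∀ k, IsOpen (V k)) (n : ℕ) :
    IsClosed {p : (Fin n → X) × (ι → Bool) | ∀ k, p.2 k = true → ∃ i, p.1 i ∉ V k} := by
  simp only [ofPred_forall, imp_iff_not_or, Bool.not_eq_true, ofPred_or, ofPred_exists]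
  refine isClosed_iInter fun k => IsClosed.union ?_ ?_
  · exact (isClosed_discrete {false}).preimage
      (f := fun p : (Fin n → X) × (ι → Bool) => p.2 k) (by fun_prop)
  · exact isClosed_iUnion_of_finite fun i => (hV k).isClosed_compl.preimage
      (f := fun p : (Fin n → X) × (ι → Bool) => p.1 i) (by fun_prop)

theorem isClosed_setOf_exists_pi_mem_not_subset (hV : ∀ k, IsOpen (V k)) {K : Set X}
    (hK : IsCompact K) (n : ℕ) :
    IsClosed {x : ι → Bool | ∃ v : Fin n → X, (∀ i, v i ∈ K) ∧
      ∀ k, x k = true → ∃ i, v i ∉ V k} := by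
  have : CompactSpace K := isCompact_iff_compactSpace.mp hK
  have hT : IsClosed
      {p : (Fin n → K) × (ι → Bool) | ∀ k, p.2 k = true → ∃ i, (p.1 i : X) ∉ V k} :=
    (isClosed_setOf_forall_exists_not_mem hV n).preimage
      (f := fun p : (Fin n → K) × (ι → Bool) => (fun i => (p.1 i : X), p.2)) (by fun_prop)
  convert isClosedMap_snd_of_compactSpace _ hT using 1
  ext x
  constructor
  · rintro ⟨v, hvK, hv⟩
    exact ⟨(fun i => ⟨v i, hvK i⟩, x), hv, rfl⟩
  · rintro ⟨⟨w, x⟩, hw, rfl⟩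
    exact ⟨fun i => w i, fun i => (w i).2, hw⟩

theorem setOf_finite_not_subset_eq_iUnion_compactCovering [SigmaCompactSpace X] :
    {x : ι → Bool | ∃ u : Set X, u.Finite ∧ ∀ k, x k = true → ¬ u ⊆ V k} =
      ⋃ (m : ℕ) (n : ℕ), {x | ∃ v : Fin n → X, (∀ i, v i ∈ compactCovering X m) ∧
        ∀ k, x k = true → ∃ i, v i ∉ V k} := by
  ext x
  simp only [mem_ofPred_eq, mem_iUnion]
  constructor
  · rintro ⟨u, hu, hux⟩
    obtain ⟨n, v, -, rfl⟩ := hu.fin_param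
    choose g hg using fun i => exists_mem_compactCovering (v i)
    refine ⟨Finset.univ.sup g, n, v, fun i => ?_, fun k hk => ?_⟩
    · exact compactCovering_subset X (Finset.le_sup (Finset.mem_univ i)) (hg i)
    · simpa only [range_subset_iff, not_forall] using hux k hk
  · rintro ⟨m, n, v, -, hv⟩
    refine ⟨range v, finite_range v, fun k hk => ?_⟩
    simpa only [range_subset_iff, not_forall] using hv k hk

theorem exists_isClosed_iUnion_eq_setOf_finite_not_subset [SigmaCompactSpace X]
    (hV : ∀ k, IsOpen (V k)) :
    ∃ C : ℕ → Set (ι → Bool), (∀ k, IsClosed (C k)) ∧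
      {x : ι → Bool | ∃ u : Set X, u.Finite ∧ ∀ k, x k = true → ¬ u ⊆ V k} = ⋃ k, C k := by
  refine ⟨fun j => {x | ∃ v : Fin j.unpair.2 → X, (∀ i, v i ∈ compactCovering X j.unpair.1) ∧
    ∀ k, x k = true → ∃ i, v i ∉ V k}, fun j => ?_, ?_⟩
  · exact isClosed_setOf_exists_pi_mem_not_subset hV (isCompact_compactCovering X _) _
  · rw [setOf_finite_not_subset_eq_iUnion_compactCovering]
    exact (iUnion_unpair (fun m n => _)).symm

end FiniteWitness

theorem Zid_Fsigma_general {H : Type*} [MetricSpace H] [AddCommGroup H]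
    (D : AddSubgroup H) [SigmaCompactSpace H] (e : ℕ ≃ IndexElem H D) :
    ∃ C : ℕ → Set (ℕ → Bool), (∀ k, IsClosed (C k)) ∧
      {x : ℕ → Bool | (fun n => e n) '' {n : ℕ | x n = true} ∈ Zid D} = ⋃ k, C k := by
  obtain ⟨C, hC, hZ⟩ := exists_isClosed_iUnion_eq_setOf_finite_not_subset
    (V := fun k => UA (e k)) fun k => isOpen_UA (e k)
  refine ⟨C, hC, ?_⟩
  rw [← hZ]
  simp only [Zid, mem_ofPred_eq, forall_mem_image]

theorem Zid_Fsigma {H : Type*} [MetricSpace H] [CompleteSpace H] [TopologicalSpace.SeparableSpace H]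
    [AddCommGroup H] [IsTopologicalAddGroup H] [Uncountable H]
    (D : AddSubgroup H) (hDcount : (D : Set H).Countable) (hDdense : Dense (D : Set H))
    (hstar : PropertyStar D) [SigmaCompactSpace H] (e : ℕ ≃ IndexElem H D) :
    ∃ C : ℕ → Set (ℕ → Bool), (∀ k, IsClosed (C k)) ∧
      {x : ℕ → Bool | (fun n => e n) '' {n : ℕ | x n = true} ∈ Zid D} = ⋃ k, C k :=
  Zid_Fsigma_general D e
end

section
/- For all x, y ∈ H, the set {a ∈ A : f_a(x) ⊕ f_a(y) ≠ f_a(x ⊕ y)} is contained in {a ∈ A : {x, y, x ⊕ y} ⊄ U^a}; in particular it belongs to Z, witnessed by the finite set u = {x, y, x ⊕ y}. -/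
open Pointwise

/-! If `x ∈ U_i` and `y ∈ U_j` and `x + y ∈ U^a`, the coherence condition of `a` puts `x + y`
in a ball `U_k` with `r_i + r_j = r_k`, so the translations in `f_a` cancel. -/

lemma fmap_of_mem {H : Type*} [MetricSpace H] [AddCommGroup H] {D : AddSubgroup H}
    (a : IndexElem H D) {x : H} {i : Fin a.n} (hx : x ∈ a.U i) :
    fmap a x = x - a.r i := by
  have h : ∃ i, x ∈ a.U i := ⟨i, hx⟩
  have hchoose : h.choose = i := by
    by_contra hne
    exact (a.disj _ _ hne).ne_of_mem h.choose_spec hx rfl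
  simp [fmap, dif_pos h, hchoose]

lemma fmap_add_of_subset_UA {H : Type*} [MetricSpace H] [AddCommGroup H] {D : AddSubgroup H}
    (a : IndexElem H D) {x y : H} (h : ({x, y, x + y} : Set H) ⊆ UA a) :
    fmap a x + fmap a y = fmap a (x + y) := by
  obtain ⟨_, ⟨i, rfl⟩, hxi⟩ : x ∈ ⋃ l, a.U l := h (by simp)
  obtain ⟨_, ⟨j, rfl⟩, hyj⟩ : y ∈ ⋃ l, a.U l := h (by simp)
  have hxy : x + y ∈ (a.U i + a.U j) ∩ (⋃ l, a.U l) :=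
    ⟨Set.add_mem_add hxi hyj, h (by simp)⟩
  rcases a.cond i j with ⟨k, hrk, hsub⟩ | hempty
  · rw [fmap_of_mem a hxi, fmap_of_mem a hyj, fmap_of_mem a (hsub hxy), ← hrk]
    abel
  · simp [hempty] at hxy

theorem fmap_defect_mem_Zid_general {H : Type*} [MetricSpace H] [AddCommGroup H]
    (D : AddSubgroup H) (x y : H) :
    ({a : IndexElem H D | fmap a x + fmap a y ≠ fmap a (x + y)} ⊆
      {a : IndexElem H D | ¬ ({x, y, x + y} : Set H) ⊆ UA a}) ∧
    (∀ a ∈ {a : IndexElem H D | fmap a x + fmap a y ≠ fmap a (x + y)},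
      ¬ ({x, y, x + y} : Set H) ⊆ UA a) ∧
    {a : IndexElem H D | fmap a x + fmap a y ≠ fmap a (x + y)} ∈ Zid D := by
  have defect_subset : ∀ a : IndexElem H D, fmap a x + fmap a y ≠ fmap a (x + y) →
      ¬ ({x, y, x + y} : Set H) ⊆ UA a :=
    fun a hne hsub => hne (fmap_add_of_subset_UA a hsub)
  exact ⟨defect_subset, defect_subset, {x, y, x + y}, Set.toFinite _, defect_subset⟩

theorem fmap_defect_mem_Zid {H : Type*} [MetricSpace H] [CompleteSpace H] [TopologicalSpace.SeparableSpace H]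
    [AddCommGroup H] [IsTopologicalAddGroup H] [Uncountable H]
    (D : AddSubgroup H) (hDcount : (D : Set H).Countable) (hDdense : Dense (D : Set H))
    (hstar : PropertyStar D) (x y : H) :
    ({a : IndexElem H D | fmap a x + fmap a y ≠ fmap a (x + y)} ⊆
      {a : IndexElem H D | ¬ ({x, y, x + y} : Set H) ⊆ UA a}) ∧
    (∀ a ∈ {a : IndexElem H D | fmap a x + fmap a y ≠ fmap a (x + y)},
      ¬ ({x, y, x + y} : Set H) ⊆ UA a) ∧
    {a : IndexElem H D | fmap a x + fmap a y ≠ fmap a (x + y)} ∈ Zid D :=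
  fmap_defect_mem_Zid_general D x y
end

section
/- For every finite set u ⊆ H and every nonempty rational ball B ⊆ H, there exists a ∈ A such that u ⊆ U^a, U^a ∩ B ≠ ∅, and there is a nonempty rational ball B' ⊆ B with B' ∩ U^a = ∅ (so that B ∖ U^a is nonempty and not dense in B). -/
open Pointwise

/-! Property (*) moves the finite set `s = u ∪ {centre of B}` to points of `D` obeying every
relation `x + y = z` that holds in `s`. Balls of a small rational radius around the moved points
are separated so well that a sum of two of them meets a third only along such a relation, which
is exactly the coherence condition defining `A`. Since `H` is an uncountable separable group it
has no isolated points, so `B` contains a point off `s`, and a small rational ball around it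
misses `U^a`. -/

open Set Metric Filter Topology

theorem perfectSpace_of_separableSpace {G : Type*} [TopologicalSpace G] [AddGroup G]
    [IsTopologicalAddGroup G] [TopologicalSpace.SeparableSpace G] [Uncountable G] :
    PerfectSpace G := by
  refine perfectSpace_iff_forall_not_isolated.2 fun x => ⟨fun hx => ?_⟩
  have : DiscreteTopology G :=
    (AddAction.IsPretransitive.discreteTopology_iff G x).2
      ((isOpen_singleton_iff_punctured_nhds x).2 hx)
  exact not_countable (TopologicalSpace.separableSpace_iff_countable.1 ‹_›)

theorem Set.Finite.eventually_pairwiseDisjoint_ball {X : Type*} [MetricSpace X] {s : Set X}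
    (hs : s.Finite) : ∀ᶠ ρ in 𝓝[>] (0 : ℝ), s.PairwiseDisjoint (ball · ρ) := by
  show ∀ᶠ ρ in 𝓝[>] (0 : ℝ), ∀ w ∈ s, ∀ w' ∈ s, w ≠ w' → Disjoint (ball w ρ) (ball w' ρ)
  refine (eventually_all_finite hs).2 fun w _ => (eventually_all_finite hs).2 fun w' _ => ?_
  by_cases h : w = w'
  · exact Eventually.of_forall fun _ hne => absurd h hne
  filter_upwards [Ioo_mem_nhdsGT (half_pos (dist_pos.2 h))] with ρ hρ _
  exact ball_disjoint_ball (by linarith [hρ.2])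

theorem eventually_ball_add_ball_subset_s15 {G : Type*} [PseudoMetricSpace G] [Add G]
    [ContinuousAdd G] (x y : G) {ρ : ℝ} (hρ : 0 < ρ) :
    ∀ᶠ δ in 𝓝[>] (0 : ℝ), ball x δ + ball y δ ⊆ ball (x + y) ρ := by
  obtain ⟨δ₀, hδ₀, hadd⟩ :=
    Metric.continuousAt_iff.1
      ((continuous_add : Continuous fun p : G × G => p.1 + p.2).continuousAt (x := (x, y))) ρ hρ
  filter_upwards [Ioo_mem_nhdsGT hδ₀] with δ hδ
  rintro _ ⟨a, ha, b, hb, rfl⟩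
  refine hadd (x := (a, b)) ?_
  rw [Prod.dist_eq]
  exact max_lt ((mem_ball.1 ha).trans hδ.2) ((mem_ball.1 hb).trans hδ.2)

section RationalBall

variable {H : Type*} [MetricSpace H] {D : Set H}

theorem isRationalBall_ball {c : H} (hc : c ∈ D) {ε : ℚ} (hε : 0 < ε) :
    IsRationalBall D (ball c ε) :=
  ⟨c, hc, ε, hε, by ext; simp [dist_comm]⟩

theorem IsRationalBall.exists_eq_ball {B : Set H} (hB : IsRationalBall D B) :
    ∃ c ∈ D, ∃ ε : ℚ, 0 < ε ∧ B = ball c ε := by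
  obtain ⟨c, hc, ε, hε, rfl⟩ := hB
  exact ⟨c, hc, ε, hε, by ext; simp [dist_comm]⟩

theorem Dense.exists_isRationalBall_subset (hD : Dense D) {V : Set H} (hV : IsOpen V)
    (hne : V.Nonempty) : ∃ B, IsRationalBall D B ∧ B.Nonempty ∧ B ⊆ V := by
  obtain ⟨x, hx⟩ := hne
  obtain ⟨ε, hε, hball⟩ := Metric.isOpen_iff.1 hV x hx
  obtain ⟨q, hqD, hxq⟩ := Metric.mem_closure_iff.1 (hD x) (ε / 2) (half_pos hε)
  obtain ⟨t, ht₀, htε⟩ := exists_rat_btwn (half_pos hε)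
  have ht : (0 : ℚ) < t := by exact_mod_cast ht₀
  refine ⟨ball q t, isRationalBall_ball hqD ht, ⟨q, mem_ball_self ht₀⟩, ?_⟩
  exact (ball_subset_ball' (by rw [dist_comm]; linarith)).trans hball

end RationalBall

theorem PropertyStar.exists_approx_preserving_sums {H : Type*} [MetricSpace H] [AddCommGroup H]
    {D : AddSubgroup H} (hstar : PropertyStar D) (hD : Dense (D : Set H)) {n : ℕ}
    (e : Fin n → H) {ε : ℝ} (hε : 0 < ε) :
    ∃ g : Fin n → H, (∀ i, g i ∈ D) ∧ (∀ i, dist (g i) (e i) < ε) ∧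
      ∀ i j k, e i + e j = e k → g i + g j = g k := by
  classical
  rcases Nat.eq_zero_or_pos n with rfl | hn
  · exact ⟨e, finZeroElim, finZeroElim, finZeroElim⟩
  obtain ⟨ε', hε'₀, hε'⟩ := exists_rat_btwn (half_pos hε)
  have hε'pos : (0 : ℚ) < ε' := by exact_mod_cast hε'₀
  choose c hcD hc using fun i => Metric.mem_closure_iff.1 (hD (e i)) ε' hε'₀
  -- the relation `e i + e j = e k` becomes the equation `x i + x j - x k = 0`
  let eqn : Fin n × Fin n × Fin n → (Fin n → ℤ) × H := fun t =>
    (Pi.single t.1 1 + Pi.single t.2.1 1 - Pi.single t.2.2 1, 0)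
  have heqn : ∀ t (x : Fin n → H), ∑ l, (eqn t).1 l • x l = x t.1 + x t.2.1 - x t.2.2 := by
    intro t x
    simp only [eqn, ← Fintype.linearCombination_apply ℤ, map_add, map_sub,
      Fintype.linearCombination_apply_single, one_smul]
  have heqn0 : ∀ t, (eqn t).2 = 0 := fun _ => rfl
  let P := ((Finset.univ : Finset (Fin n × Fin n × Fin n)).filter
    fun t => e t.1 + e t.2.1 = e t.2.2).image eqn
  have hsolves : ∀ x : Fin n → H, (∀ p ∈ P, ∑ i, p.1 i • x i = p.2) ↔
      ∀ i j k, e i + e j = e k → x i + x j = x k := by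
    intro x
    simp only [P, Finset.forall_mem_image, Finset.mem_filter, Finset.mem_univ, true_and, heqn,
      heqn0, sub_eq_zero, Prod.forall]
  obtain ⟨g, hg, hgP⟩ := hstar n hn c hcD ε' hε'pos P
    (Finset.forall_mem_image.2 fun t _ => heqn0 t ▸ zero_mem D)
    ⟨e, fun i => (hc i).le, (hsolves e).2 fun _ _ _ h => h⟩
  refine ⟨g, fun i => (hg i).1, fun i => ?_, (hsolves g).1 hgP⟩
  calc dist (g i) (e i) ≤ dist (g i) (c i) + dist (e i) (c i) := dist_triangle_right _ _ _
    _ < ε := by linarith [(hg i).2, hc i]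

theorem indexElem_cond_of_add_inter_nonempty {H : Type*} [Add H] {n : ℕ} {U : Fin n → Set H}
    {r : Fin n → H} (hr : ∀ i, r i ∈ U i) (hdisj : ∀ i j, i ≠ j → Disjoint (U i) (U j))
    (hsum : ∀ i j l, ((U i + U j) ∩ U l).Nonempty → r i + r j = r l) (i j : Fin n) :
    (∃ k, r i + r j = r k ∧ (U i + U j) ∩ (⋃ l, U l) ⊆ U k) ∨
      (U i + U j) ∩ (⋃ l, U l) = ∅ := by
  rcases ((U i + U j) ∩ ⋃ l, U l).eq_empty_or_nonempty with h | ⟨x, hx, hxU⟩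
  · exact Or.inr h
  obtain ⟨k, hk⟩ := mem_iUnion.1 hxU
  refine Or.inl ⟨k, hsum i j k ⟨x, hx, hk⟩, ?_⟩
  rintro x' ⟨hx', hx'U⟩
  obtain ⟨l, hl⟩ := mem_iUnion.1 hx'U
  have hkl : k = l := by
    by_contra hkl
    exact (hdisj k l hkl).ne_of_mem (hr k) (hr l)
      ((hsum i j k ⟨x, hx, hk⟩).symm.trans (hsum i j l ⟨x', hx', hl⟩))
  exact hkl ▸ hl

theorem exists_indexElem_covering_subset_iUnion_ball {H : Type*} [MetricSpace H] [AddCommGroup H]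
    [ContinuousAdd H]
    {D : AddSubgroup H} (hstar : PropertyStar D) (hD : Dense (D : Set H)) {s : Finset H}
    (hs : s.Nonempty) {r : ℝ} (hr : 0 < r) (hne : (⋃ z ∈ s, ball z r) ≠ univ) :
    ∃ a : IndexElem H D, (s : Set H) ⊆ UA a ∧ UA a ⊆ ⋃ z ∈ s, ball z r := by
  classical
  let e : Fin s.card → H := fun i => s.equivFin.symm i
  have he_inj : Function.Injective e := Subtype.val_injective.comp s.equivFin.symm.injective
  let W := s ∪ (s + s)
  have heW : ∀ i, e i ∈ W := fun i => Finset.mem_union_left _ (s.equivFin.symm i).2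
  have hsumW : ∀ i j, e i + e j ∈ W := fun i j => Finset.mem_union_right _
    (Finset.add_mem_add (s.equivFin.symm i).2 (s.equivFin.symm j).2)
  -- balls of radius `ρ` around the points of `W` are disjoint, so a sum of two of the balls
  -- `U i` can meet a third `U l` only along a relation `e i + e j = e l`
  obtain ⟨ρ, hρW, hρ⟩ :=
    ((W : Set H).toFinite.eventually_pairwiseDisjoint_ball.and self_mem_nhdsWithin).exists
  obtain ⟨κ, hκadd, hκ⟩ := ((eventually_all.2 fun p : Fin s.card × Fin s.card =>
    eventually_ball_add_ball_subset_s15 (e p.1) (e p.2) hρ).and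
      (Ioo_mem_nhdsGT (lt_min hρ hr))).exists
  obtain ⟨lam, hlam₀, hlamκ⟩ := exists_rat_btwn (half_pos hκ.1)
  have hlam : (0 : ℚ) < lam := by exact_mod_cast hlam₀
  obtain ⟨g, hgD, hge, hg_add⟩ := hstar.exists_approx_preserving_sums hD e hlam₀
  let U : Fin s.card → Set H := fun i => ball (g i) lam
  have he_mem : ∀ i, e i ∈ U i := fun i => mem_ball'.2 (hge i)
  have hUκ : ∀ i, U i ⊆ ball (e i) κ := fun i => ball_subset_ball' (by linarith [hge i])
  have hUρ : ∀ i, U i ⊆ ball (e i) ρ :=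
    fun i => (hUκ i).trans (ball_subset_ball (hκ.2.le.trans (min_le_left _ _)))
  have hcover : (s : Set H) ⊆ ⋃ i, U i := fun z hz =>
    mem_iUnion.2 ⟨s.equivFin ⟨z, hz⟩, by simpa [e] using he_mem (s.equivFin ⟨z, hz⟩)⟩
  have hsmall : (⋃ i, U i) ⊆ ⋃ z ∈ s, ball z r := iUnion_subset fun i =>
    ((hUκ i).trans (ball_subset_ball (hκ.2.le.trans (min_le_right _ _)))).trans
      (subset_biUnion_of_mem (u := fun z => ball z r) (s.equivFin.symm i).2)
  have hdisj : ∀ i j, i ≠ j → Disjoint (U i) (U j) := fun i j hij =>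
    Set.disjoint_left.2 fun x hi hj =>
      hij (he_inj (hρW.elim_set (heW i) (heW j) x (hUρ i hi) (hUρ j hj)))
  have hsum : ∀ i j l, ((U i + U j) ∩ U l).Nonempty → e i + e j = e l := by
    rintro i j l ⟨_, ⟨x, hx, y, hy, rfl⟩, hxy⟩
    exact hρW.elim_set (hsumW i j) (heW l) (x + y)
      (hκadd (i, j) (add_mem_add (hUκ i hx) (hUκ j hy))) (hUρ l hxy)
  refine ⟨⟨s.card, U, g, fun i => isRationalBall_ball (hgD i) hlam, fun i => ⟨e i, he_mem i⟩,
    hdisj, hs.to_set.mono hcover, fun h => hne (eq_univ_of_univ_subset (h ▸ hsmall)),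
    fun i => mem_ball_self hlam₀, hgD,
    indexElem_cond_of_add_inter_nonempty (fun i => mem_ball_self hlam₀) hdisj
      fun i j l h => hg_add i j l (hsum i j l h)⟩, hcover, hsmall⟩

theorem exists_indexElem_covering_u_meeting_ball_general {H : Type*} [MetricSpace H] [TopologicalSpace.SeparableSpace H]
    [AddCommGroup H] [IsTopologicalAddGroup H] [Uncountable H]
    (D : AddSubgroup H) (hDdense : Dense (D : Set H))
    (hstar : PropertyStar D)
    (u : Set H) (hu : u.Finite) (B : Set H)
    (hB : IsRationalBall (D : Set H) B) :
    ∃ a : IndexElem H D, u ⊆ UA a ∧ (UA a ∩ B).Nonempty ∧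
      ∃ B' : Set H, IsRationalBall (D : Set H) B' ∧ B'.Nonempty ∧ B' ⊆ B ∧
        B' ∩ UA a = ∅ := by
  classical
  have := perfectSpace_of_separableSpace (G := H)
  obtain ⟨c, -, ε, hε, rfl⟩ := hB.exists_eq_ball
  have hc : c ∈ ball c ε := mem_ball_self (by exact_mod_cast hε)
  let s := insert c hu.toFinset
  obtain ⟨y, hyB, hys⟩ :=
    ((infinite_of_mem_nhds c (isOpen_ball.mem_nhds hc)).sdiff s.finite_toSet).nonempty
  obtain ⟨r, hr_lt, hr⟩ := ((s.eventually_all.2 fun z hz =>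
    Ioo_mem_nhdsGT (dist_pos.2 (ne_of_mem_of_not_mem hz hys).symm)).and
      self_mem_nhdsWithin).exists
  let K := ⋃ z ∈ s, closedBall z r
  have hyK : y ∉ K := by simpa [K] using fun z hz => (hr_lt z hz).2
  have hballs : (⋃ z ∈ s, ball z r) ⊆ K := iUnion₂_mono fun _ _ => ball_subset_closedBall
  obtain ⟨a, hsa, haK⟩ := exists_indexElem_covering_subset_iUnion_ball hstar hDdense
    (Finset.insert_nonempty _ _) hr
    ((ne_univ_iff_exists_notMem _).2 ⟨y, fun hy => hyK (hballs hy)⟩)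
  obtain ⟨B', hB', hB'ne, hB'K⟩ := hDdense.exists_isRationalBall_subset
    (isOpen_ball.sdiff (s.finite_toSet.isClosed_biUnion fun _ _ => isClosed_closedBall))
    ⟨y, hyB, hyK⟩
  refine ⟨a, fun x hx => hsa (by simp [hx]), ⟨c, hsa (by simp), hc⟩,
    B', hB', hB'ne, hB'K.trans sdiff_subset, ?_⟩
  exact eq_empty_of_forall_notMem fun x hx => (hB'K hx.1).2 (hballs (haK hx.2))

theorem exists_indexElem_covering_u_meeting_ball {H : Type*} [MetricSpace H] [CompleteSpace H] [TopologicalSpace.SeparableSpace H]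
    [AddCommGroup H] [IsTopologicalAddGroup H] [Uncountable H]
    (D : AddSubgroup H) (hDcount : (D : Set H).Countable) (hDdense : Dense (D : Set H))
    (hstar : PropertyStar D)
    (u : Set H) (hu : u.Finite) (B : Set H)
    (hB : IsRationalBall (D : Set H) B) (hBne : B.Nonempty) :
    ∃ a : IndexElem H D, u ⊆ UA a ∧ (UA a ∩ B).Nonempty ∧
      ∃ B' : Set H, IsRationalBall (D : Set H) B' ∧ B'.Nonempty ∧ B' ⊆ B ∧
        B' ∩ UA a = ∅ :=
  exists_indexElem_covering_u_meeting_ball_general D hDdense hstar u hu B hB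
end
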